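/- Let A be a definite n×n max-plus matrix and K ⊆ {1,...,n}. There exists an eigenvector x of A (with eigenvalue 0) whose support is exactly K (x_i ≠ -∞ iff i ∈ K) if and only if A_{ij} = -∞ for all i ∉ K and j ∈ K. -/

import Mathlib

namespace MaxPlus

/-- Max-plus (tropical) matrix product over `EReal` (`⊥ = -∞` is the max-plus zero,
`+` is the max-plus multiplication, `⊔`/`⨆` is the max-plus addition). -/
noncomputable def mmul {n : ℕ} (A B : Matrix (Fin n) (Fin n) EReal) : Matrix (Fin n) (Fin n) EReal :=
  fun i j => ⨆ k, A i k + B k j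

/-- The max-plus identity matrix. -/
noncomputable def mId (n : ℕ) : Matrix (Fin n) (Fin n) EReal := fun i j => if i = j then 0 else ⊥

/-- Max-plus matrix powers. -/
noncomputable def mpow {n : ℕ} (A : Matrix (Fin n) (Fin n) EReal) : ℕ → Matrix (Fin n) (Fin n) EReal
  | 0 => mId n
  | m + 1 => mmul (mpow A m) A

/-- The max-plus Kleene star `A* = I ⊕ A ⊕ A² ⊕ ⋯` (entrywise supremum of all powers). -/
noncomputable def mstar {n : ℕ} (A : Matrix (Fin n) (Fin n) EReal) : Matrix (Fin n) (Fin n) EReal :=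
  fun i j => ⨆ m, mpow A m i j

/-- Weight of the cycle determined by the list `l = [i₁,…,i_k]`,
namely `A i₁ i₂ + ⋯ + A i_k i₁`. -/
noncomputable def cycleWeight {n : ℕ} (A : Matrix (Fin n) (Fin n) EReal) (l : List (Fin n)) : EReal :=
  ((l.zip (l.rotate 1)).map fun p => A p.1 p.2).sum

/-- A nonempty list of pairwise distinct indices, representing an elementary cycle. -/
def IsCycle {n : ℕ} (l : List (Fin n)) : Prop := l ≠ [] ∧ l.Nodup

/-- All elementary cycles have nonpositive weight, i.e. the maximal cycle mean `λ(A) ≤ 0`. -/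
def CycleBound {n : ℕ} (A : Matrix (Fin n) (Fin n) EReal) : Prop :=
  ∀ l : List (Fin n), IsCycle l → cycleWeight A l ≤ 0

/-- A definite matrix: maximal cycle mean `0` and zero (max-plus unit) diagonal.
(The diagonal entries give cycles of weight `0`, so `λ(A) = 0` is equivalent to
`CycleBound A` here.) -/
def Definite {n : ℕ} (A : Matrix (Fin n) (Fin n) EReal) : Prop :=
  CycleBound A ∧ ∀ i, A i i = 0

/-- Max-plus action of a matrix on a vector: `(A ⊙ x)_i = max_j (A_{ij} + x_j)`. -/
noncomputable def mapVec {n : ℕ} (A : Matrix (Fin n) (Fin n) EReal) (x : Fin n → EReal) :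
    Fin n → EReal :=
  fun i => ⨆ j, A i j + x j

/-- The max-plus eigenspace of `A` for the eigenvalue `0`. -/
def eig {n : ℕ} (A : Matrix (Fin n) (Fin n) EReal) : Set (Fin n → EReal) :=
  {x | mapVec A x = x}

/-- The max-plus column span of a matrix. -/
def mspan {n : ℕ} (A : Matrix (Fin n) (Fin n) EReal) : Set (Fin n → EReal) :=
  {y | ∃ α : Fin n → EReal, y = fun i => ⨆ j, α j + A i j}

end MaxPlus

/-!
The eigenvector is `x = A* ⊙ c`, where `c` is the max-plus indicator vector of `K`
(`0` on `K`, `-∞` elsewhere). Every vector of this form is an eigenvector: `A A* ≤ A*` gives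
`A x ≤ x`, and the zero diagonal gives `A x ≥ x` for any `x`. As `A*` has a nonnegative diagonal,
`x ≥ c`, so the support of `x` contains `K`; conversely no power of `A` leads from outside `K`
into `K`, so neither does `A*`, and `x` vanishes off `K`.
The other direction reads the eigenvector equation at a row `i ∉ K`: `-∞ = x i ≥ A i j + x j`.
-/

namespace EReal

theorem add_iSup {ι : Sort*} (a : EReal) (f : ι → EReal) :
    a + ⨆ i, f i = ⨆ i, a + f i := by
  refine le_antisymm ?_ (iSup_le fun i => add_le_add_right (le_iSup f i) a)
  induction a with
  | bot => simp
  | coe r =>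
    rw [add_comm]
    refine add_le_of_le_sub (iSup_le fun i => ?_)
    rw [le_sub_iff_add_le (.inl (coe_ne_bot r)) (.inl (coe_ne_top r)), add_comm]
    exact le_iSup (fun i => (r : EReal) + f i) i
  | top =>
    obtain h | ⟨i, hi⟩ : (⨆ i, f i) = ⊥ ∨ ∃ i, f i ≠ ⊥ := by
      simpa only [iSup_eq_bot, ← not_forall] using em (∀ i, f i = ⊥)
    · simp [h]
    · calc ⊤ + ⨆ i, f i ≤ ⊤ + f i := by rw [top_add_of_ne_bot hi]; exact le_top
        _ ≤ ⨆ i, ⊤ + f i := le_iSup (fun i => ⊤ + f i) i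

theorem iSup_add {ι : Sort*} (a : EReal) (f : ι → EReal) :
    (⨆ i, f i) + a = ⨆ i, f i + a := by
  simp only [add_comm _ a, add_iSup]

end EReal

namespace MaxPlus

section

variable {n : ℕ} (A : Matrix (Fin n) (Fin n) EReal)

theorem mmul_assoc (B C : Matrix (Fin n) (Fin n) EReal) :
    mmul (mmul A B) C = mmul A (mmul B C) := by
  funext i j
  calc (⨆ k, (⨆ l, A i l + B l k) + C k j)
      = ⨆ k, ⨆ l, A i l + B l k + C k j := iSup_congr fun k => EReal.iSup_add _ _
    _ = ⨆ l, ⨆ k, A i l + B l k + C k j := iSup_comm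
    _ = ⨆ l, A i l + ⨆ k, B l k + C k j := by
        simp only [EReal.add_iSup, add_assoc]

theorem mId_mmul : mmul (mId n) A = A := by
  funext i j
  refine le_antisymm (iSup_le fun k => ?_) ?_
  · by_cases h : i = k <;> simp [mId, h]
  · calc A i j = mId n i i + A i j := by simp [mId]
      _ ≤ _ := le_iSup (fun k => mId n i k + A k j) i

theorem mmul_mId : mmul A (mId n) = A := by
  funext i j
  refine le_antisymm (iSup_le fun k => ?_) ?_
  · by_cases h : k = j <;> simp [mId, h]
  · calc A i j = A i j + mId n j j := by simp [mId]
      _ ≤ _ := le_iSup (fun k => A i k + mId n k j) j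

theorem mpow_succ' (m : ℕ) : mpow A (m + 1) = mmul A (mpow A m) := by
  induction m with
  | zero => exact (mId_mmul A).trans (mmul_mId A).symm
  | succ m ih =>
    change mmul (mpow A (m + 1)) A = mmul A (mmul (mpow A m) A)
    rw [ih, mmul_assoc]

theorem mpow_le_mstar (m : ℕ) (i j : Fin n) : mpow A m i j ≤ mstar A i j :=
  le_iSup (fun m => mpow A m i j) m

theorem zero_le_mstar_self (i : Fin n) : 0 ≤ mstar A i i := by
  simpa [mpow, mId] using mpow_le_mstar A 0 i i

theorem add_mstar_le_mstar (i k j : Fin n) : A i k + mstar A k j ≤ mstar A i j := by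
  rw [mstar, EReal.add_iSup]
  refine iSup_le fun m => le_trans ?_ (mpow_le_mstar A (m + 1) i j)
  rw [mpow_succ']
  exact le_iSup (fun k => A i k + mpow A m k j) k

theorem le_mapVec_of_diag_nonneg (hA : ∀ i, 0 ≤ A i i) (x : Fin n → EReal) :
    x ≤ mapVec A x := fun i =>
  calc x i = 0 + x i := (zero_add _).symm
    _ ≤ A i i + x i := add_le_add_left (hA i) _
    _ ≤ mapVec A x i := le_iSup (fun k => A i k + x k) i

theorem mapVec_mstar_mem_eig (hA : ∀ i, 0 ≤ A i i) (c : Fin n → EReal) :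
    mapVec (mstar A) c ∈ eig A := by
  refine le_antisymm (fun i => iSup_le fun k => ?_) (le_mapVec_of_diag_nonneg A hA _)
  change A i k + (⨆ j, mstar A k j + c j) ≤ ⨆ j, mstar A i j + c j
  rw [EReal.add_iSup]
  refine iSup_le fun j => ?_
  rw [← add_assoc]
  exact (add_le_add_left (add_mstar_le_mstar A i k j) _).trans
    (le_iSup (fun j => mstar A i j + c j) j)

section Invariant

variable {A} {K : Finset (Fin n)}

theorem mpow_eq_bot_of_notMem (hK : ∀ i ∉ K, ∀ j ∈ K, A i j = ⊥) (m : ℕ) {i j : Fin n}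
    (hi : i ∉ K) (hj : j ∈ K) : mpow A m i j = ⊥ := by
  induction m generalizing j with
  | zero => simp [mpow, mId, show i ≠ j by rintro rfl; exact hi hj]
  | succ m ih =>
    refine iSup_eq_bot.2 fun k => ?_
    by_cases hk : k ∈ K
    · rw [ih hk, EReal.bot_add]
    · rw [hK k hk j hj, EReal.add_bot]

theorem mapVec_mstar_indicator_ne_bot_iff (hK : ∀ i ∉ K, ∀ j ∈ K, A i j = ⊥) (i : Fin n) :
    mapVec (mstar A) (fun j => if j ∈ K then 0 else ⊥) i ≠ ⊥ ↔ i ∈ K := by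
  refine ⟨fun h => ?_, fun hi => ?_⟩
  · by_contra hi
    refine h (iSup_eq_bot.2 fun j => ?_)
    by_cases hj : j ∈ K
    · simp [hj, mstar, mpow_eq_bot_of_notMem hK _ hi hj]
    · simp [hj]
  · refine ne_bot_of_le_ne_bot EReal.zero_ne_bot ((zero_le_mstar_self A i).trans ?_)
    calc mstar A i i = mstar A i i + if i ∈ K then (0 : EReal) else ⊥ := by simp [hi]
      _ ≤ _ := le_iSup (fun j => mstar A i j + if j ∈ K then (0 : EReal) else ⊥) i

end Invariant

theorem eq_bot_of_mem_eig {x : Fin n → EReal} (hx : x ∈ eig A) {i j : Fin n}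
    (hi : x i = ⊥) (hj : x j ≠ ⊥) : A i j = ⊥ := by
  have : A i j + x j ≤ mapVec A x i := le_iSup (fun j => A i j + x j) j
  rw [show mapVec A x = x from hx, hi, le_bot_iff, EReal.add_eq_bot_iff] at this
  exact this.resolve_right hj

end

theorem eigenvector_with_support_iff_general {n : ℕ} (A : Matrix (Fin n) (Fin n) EReal)
    (hd : Definite A) (K : Finset (Fin n)) :
    (∃ x ∈ eig A, ∀ i, x i ≠ ⊥ ↔ i ∈ K) ↔
      ∀ i ∉ K, ∀ j ∈ K, A i j = ⊥ := by
  constructor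
  · rintro ⟨x, hx, hsupp⟩ i hi j hj
    exact eq_bot_of_mem_eig A hx (not_not.1 (mt (hsupp i).1 hi)) ((hsupp j).2 hj)
  · intro hK
    exact ⟨_, mapVec_mstar_mem_eig A (fun i => (hd.2 i).ge) _,
      mapVec_mstar_indicator_ne_bot_iff hK⟩

/-- For a definite matrix `A` and a nonempty index set `K`, there is an eigenvector
(for the eigenvalue `0`) with support exactly `K` iff `A_{ij} = -∞` for all `i ∉ K`,
`j ∈ K`. -/
theorem eigenvector_with_support_iff {n : ℕ} (A : Matrix (Fin n) (Fin n) EReal)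
    (hd : Definite A) (K : Finset (Fin n)) (hK : K.Nonempty) :
    (∃ x ∈ eig A, ∀ i, x i ≠ ⊥ ↔ i ∈ K) ↔
      ∀ i ∉ K, ∀ j ∈ K, A i j = ⊥ :=
  eigenvector_with_support_iff_general A hd K

end MaxPlus
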